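/- Value substitution: If Γ, x :^θ' B ⊢^θ a : A and Γ ⊢^θ' v : B where v is a value, then Γ ⊢^θ [v/x]a : A. -/

import Mathlib

/-- Consistency classifiers: the logical (L) and programmatic (P) fragments. -/
inductive Frag : Type
  | L | P
deriving DecidableEq, Repr

/-- Types, with de Bruijn type variables for recursive types. -/
inductive Ty : Type
  | unit : Ty
  | arrow : Ty → Frag → Ty → Ty       -- A →^θ B
  | sum : Ty → Ty → Ty                -- A + B
  | at_ : Ty → Frag → Ty              -- A @ θ
  | tvar : ℕ → Ty                     -- α
  | mu : Ty → Ty                      -- μα. A  (binds one type variable)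
deriving DecidableEq, Repr

namespace Ty

def size : Ty → ℕ
  | unit => 1
  | arrow A _ B => A.size + B.size + 1
  | sum A B => A.size + B.size + 1
  | at_ A _ => A.size + 1
  | tvar _ => 1
  | mu A => A.size + 1

def rename (ρ : ℕ → ℕ) : Ty → Ty
  | unit => unit
  | arrow A θ B => arrow (A.rename ρ) θ (B.rename ρ)
  | sum A B => sum (A.rename ρ) (B.rename ρ)
  | at_ A θ => at_ (A.rename ρ) θ
  | tvar n => tvar (ρ n)
  | mu A => mu (A.rename (fun n => match n with | 0 => 0 | n+1 => ρ n + 1))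

def subst (σ : ℕ → Ty) : Ty → Ty
  | unit => unit
  | arrow A θ B => arrow (A.subst σ) θ (B.subst σ)
  | sum A B => sum (A.subst σ) (B.subst σ)
  | at_ A θ => at_ (A.subst σ) θ
  | tvar n => σ n
  | mu A => mu (A.subst (fun n => match n with | 0 => tvar 0 | n+1 => (σ n).rename Nat.succ))

end Ty

/-- [B/α]A : substitute B for the outermost type variable of A. -/
def tsubst0 (B A : Ty) : Ty := A.subst (fun n => match n with | 0 => B | n+1 => .tvar n)

/-- Terms, with de Bruijn term variables.  `lam` binds one variable (x);
    `rec` binds two: index 0 is x, index 1 is f.  `unbox` and the branches of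
    `case` bind one variable. -/
inductive Tm : Type
  | var : ℕ → Tm
  | lam : Tm → Tm                     -- λx. a
  | recc : Tm → Tm                     -- rec f x. a
  | app : Tm → Tm → Tm
  | box : Tm → Tm
  | unbox : Tm → Tm → Tm              -- unbox x = a in b
  | unit : Tm
  | inl : Tm → Tm
  | inr : Tm → Tm
  | case : Tm → Tm → Tm → Tm          -- case a of {inl x ⇒ b1 ; inr x ⇒ b2}
  | roll : Tm → Tm
  | unroll : Tm → Tm
deriving DecidableEq, Repr

namespace Tm

def liftR (ρ : ℕ → ℕ) : ℕ → ℕ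
  | 0 => 0
  | n+1 => ρ n + 1

def rename (ρ : ℕ → ℕ) : Tm → Tm
  | var n => var (ρ n)
  | lam a => lam (a.rename (liftR ρ))
  | recc a => recc (a.rename (liftR (liftR ρ)))
  | app a b => app (a.rename ρ) (b.rename ρ)
  | box a => box (a.rename ρ)
  | unbox a b => unbox (a.rename ρ) (b.rename (liftR ρ))
  | unit => unit
  | inl a => inl (a.rename ρ)
  | inr a => inr (a.rename ρ)
  | case a b c => case (a.rename ρ) (b.rename (liftR ρ)) (c.rename (liftR ρ))
  | roll a => roll (a.rename ρ)
  | unroll a => unroll (a.rename ρ)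

def liftS (σ : ℕ → Tm) : ℕ → Tm
  | 0 => var 0
  | n+1 => (σ n).rename Nat.succ

def subst (σ : ℕ → Tm) : Tm → Tm
  | var n => σ n
  | lam a => lam (a.subst (liftS σ))
  | recc a => recc (a.subst (liftS (liftS σ)))
  | app a b => app (a.subst σ) (b.subst σ)
  | box a => box (a.subst σ)
  | unbox a b => unbox (a.subst σ) (b.subst (liftS σ))
  | unit => unit
  | inl a => inl (a.subst σ)
  | inr a => inr (a.subst σ)
  | case a b c => case (a.subst σ) (b.subst (liftS σ)) (c.subst (liftS σ))
  | roll a => roll (a.subst σ)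
  | unroll a => unroll (a.subst σ)

end Tm

/-- [v/x]a : substitute v for the outermost term variable of a. -/
def subst1 (a v : Tm) : Tm := a.subst (fun n => match n with | 0 => v | n+1 => .var n)

/-- [v/x][w/f]a : substitute v for index 0 (x) and w for index 1 (f) in a. -/
def subst2 (a v w : Tm) : Tm :=
  a.subst (fun n => match n with | 0 => v | 1 => w | n+2 => .var n)

/-- Values. -/
inductive IsValue : Tm → Prop
  | var (n : ℕ) : IsValue (.var n)
  | unit : IsValue .unit
  | inl {v} : IsValue v → IsValue (.inl v)
  | inr {v} : IsValue v → IsValue (.inr v)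
  | lam (a : Tm) : IsValue (.lam a)
  | recc (a : Tm) : IsValue (.recc a)
  | box {v} : IsValue v → IsValue (.box v)
  | roll {v} : IsValue v → IsValue (.roll v)

/-- First-order types. -/
inductive FO : Ty → Prop
  | unit : FO .unit
  | sum {A B} : FO A → FO B → FO (.sum A B)
  | at_ (A : Ty) (θ : Frag) : FO (.at_ A θ)

/-- Typing contexts: each variable is tagged with a fragment. -/
abbrev Ctx := List (Frag × Ty)

/-- The typing judgement Γ ⊢^θ a : A. -/
inductive Typing : Ctx → Frag → Tm → Ty → Prop
  | tvar {Γ θ A n} : Γ[n]? = some (θ, A) → Typing Γ θ (.var n) A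
  | tlam {Γ θ' A B a} :
      Typing ((θ', A) :: Γ) .L a B →
      Typing Γ .L (.lam a) (.arrow A θ' B)
  | trec {Γ θ' A B a} :
      Typing ((θ', A) :: (.P, .arrow A θ' B) :: Γ) .P a B →
      Typing Γ .P (.recc a) (.arrow A θ' B)
  | tboxP {Γ θ a A} :
      Typing Γ θ a A → Typing Γ .P (.box a) (.at_ A θ)
  | tboxL {Γ θ a A} :
      Typing Γ .L a A → Typing Γ .L (.box a) (.at_ A θ)
  | tboxLV {Γ v A} :
      IsValue v → Typing Γ .P v A → Typing Γ .L (.box v) (.at_ A .P)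
  | tunbox {Γ θ θ' a b A B} :
      Typing Γ θ a (.at_ A θ') →
      Typing ((θ', A) :: Γ) θ b B →
      Typing Γ θ (.unbox a b) B
  | tapp {Γ θ θ' a b A B} :
      Typing Γ θ a (.arrow A θ' B) →
      Typing Γ θ (.box b) (.at_ A θ') →
      Typing Γ θ (.app a b) B
  | tunit {Γ θ} : Typing Γ θ .unit .unit
  | tsub {Γ a A} : Typing Γ .L a A → Typing Γ .P a A
  | tfoval {Γ v A} :
      IsValue v → FO A → Typing Γ .P v A → Typing Γ .L v A
  | tinl {Γ θ a A B} : Typing Γ θ a A → Typing Γ θ (.inl a) (.sum A B)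
  | tinr {Γ θ a A B} : Typing Γ θ a B → Typing Γ θ (.inr a) (.sum A B)
  | tcase {Γ θ θ' a b1 b2 A B C} :
      Typing Γ θ (.box a) (.at_ (.sum A B) θ') →
      Typing ((θ', A) :: Γ) θ b1 C →
      Typing ((θ', B) :: Γ) θ b2 C →
      Typing Γ θ (.case a b1 b2) C
  | troll {Γ a A} :
      Typing Γ .P a (tsubst0 (.mu A) A) →
      Typing Γ .P (.roll a) (.mu A)
  | tunroll {Γ a A} :
      Typing Γ .P a (.mu A) →
      Typing Γ .P (.unroll a) (tsubst0 (.mu A) A)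

/-- Call-by-value small-step reduction a ⇝ b. -/
inductive Step : Tm → Tm → Prop
  | beta {a v} : IsValue v → Step (.app (.lam a) v) (subst1 a v)
  | betaRec {a v} : IsValue v → Step (.app (.recc a) v) (subst2 a v (.recc a))
  | unbox {v b} : IsValue v → Step (.unbox (.box v) b) (subst1 b v)
  | caseL {v b1 b2} : IsValue v → Step (.case (.inl v) b1 b2) (subst1 b1 v)
  | caseR {v b1 b2} : IsValue v → Step (.case (.inr v) b1 b2) (subst1 b2 v)
  | unroll {v} : IsValue v → Step (.unroll (.roll v)) v
  | app1 {a a' b} : Step a a' → Step (.app a b) (.app a' b)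
  | app2 {v b b'} : IsValue v → Step b b' → Step (.app v b) (.app v b')
  | inl {a a'} : Step a a' → Step (.inl a) (.inl a')
  | inr {a a'} : Step a a' → Step (.inr a) (.inr a')
  | caseCtx {a a' b1 b2} : Step a a' → Step (.case a b1 b2) (.case a' b1 b2)
  | box {a a'} : Step a a' → Step (.box a) (.box a')
  | unbox1 {a a' b} : Step a a' → Step (.unbox a b) (.unbox a' b)
  | roll {a a'} : Step a a' → Step (.roll a) (.roll a')
  | unrollCtx {a a'} : Step a a' → Step (.unroll a) (.unroll a')

/-- Indexed multi-step reduction a ⇝^n b. -/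
inductive StepN : ℕ → Tm → Tm → Prop
  | refl (a : Tm) : StepN 0 a a
  | step {n a b c} : Step a b → StepN n b c → StepN (n+1) a c

/-- Multi-step reduction a ⇝* b. -/
inductive StepStar : Tm → Tm → Prop
  | refl (a : Tm) : StepStar a a
  | step {a b c} : Step a b → StepStar b c → StepStar a c

/-- The step-indexed value interpretation V[[A]]^θ_k.
    (The computational interpretation C[[·]] is inlined in the function-type
    and recursive-type cases; see `Cint` below.) -/
def Vint (k : ℕ) (θ : Frag) (A : Ty) : Set Tm :=
  match A, θ with
  | .unit, _ => {Tm.unit}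
  | .sum A B, θ =>
      {t | (∃ v, t = Tm.inl v ∧ v ∈ Vint k θ A) ∨ (∃ v, t = Tm.inr v ∧ v ∈ Vint k θ B)}
  | .at_ A θ', _ => {t | ∃ v, t = Tm.box v ∧ v ∈ Vint k θ' A}
  | .arrow A θ' B, .L =>
      {t | ∃ a, t = Tm.lam a ∧ Typing [] .L (Tm.lam a) (.arrow A θ' B) ∧
        ∀ j, j ≤ k → ∀ v, v ∈ Vint j θ' A →
          Typing [] .L (subst1 a v) B ∧
          ∃ w, StepStar (subst1 a v) w ∧ IsValue w ∧ w ∈ Vint j .L B}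
  | .arrow A θ' B, .P =>
      {t | ∃ a, t = Tm.recc a ∧ Typing [] .P (Tm.recc a) (.arrow A θ' B) ∧
        ∀ j, j < k → ∀ v, v ∈ Vint j θ' A →
          Typing [] .P (subst2 a v (Tm.recc a)) B ∧
          ∀ i, i ≤ j → ∀ w, StepN i (subst2 a v (Tm.recc a)) w → IsValue w →
            w ∈ Vint (j - i) .P B}
  | .mu _, .L => ∅
  | .mu A, .P =>
      {t | ∃ v, t = Tm.roll v ∧ Typing [] .P (Tm.roll v) (.mu A) ∧
        ∀ j, j < k → v ∈ Vint j .P (tsubst0 (.mu A) A)}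
  | .tvar _, _ => ∅
termination_by (k, A.size)
decreasing_by
  all_goals simp only [Prod.lex_def, Ty.size, true_and, eq_self_iff_true]
  all_goals omega

/-- The step-indexed computational interpretation C[[A]]^θ_k. -/
def Cint (k : ℕ) (θ : Frag) (A : Ty) : Set Tm :=
  match θ with
  | .P => {a | Typing [] .P a A ∧
      ∀ j, j ≤ k → ∀ v, StepN j a v → IsValue v → v ∈ Vint (k - j) .P A}
  | .L => {a | Typing [] .L a A ∧
      ∃ v, StepStar a v ∧ IsValue v ∧ v ∈ Vint k .L A}

/-! Value substitution is the instance `[v/x]` of simultaneous substitution: a substitution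
sending every variable of `Γ` to a term typed over `Δ` in that variable's own fragment preserves
typing. The substituted terms must be values because the rules TBoxLV and TFOVal type only values,
and values are closed under substitution of values. Going under binders needs weakening, which is
the same argument for renamings. -/

namespace IsValue

theorem rename {v : Tm} (h : IsValue v) (ρ : ℕ → ℕ) : IsValue (v.rename ρ) := by
  induction h <;> constructor <;> assumption

theorem subst {v : Tm} (h : IsValue v) {σ : ℕ → Tm} (hσ : ∀ n, IsValue (σ n)) :
    IsValue (v.subst σ) := by
  induction h with
  | var n => exact hσ n
  | _ => constructor <;> assumption

end IsValue

theorem isValue_liftS {σ : ℕ → Tm} (hσ : ∀ n, IsValue (σ n)) : ∀ n, IsValue (Tm.liftS σ n)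
  | 0 => .var 0
  | n + 1 => (hσ n).rename _

def IsRenaming (Γ Δ : Ctx) (ρ : ℕ → ℕ) : Prop :=
  ∀ n p, Γ[n]? = some p → Δ[ρ n]? = some p

def IsTypedSubst (Γ Δ : Ctx) (σ : ℕ → Tm) : Prop :=
  ∀ n p, Γ[n]? = some p → Typing Δ p.1 (σ n) p.2

theorem isRenaming_succ (Γ : Ctx) (e : Frag × Ty) : IsRenaming Γ (e :: Γ) Nat.succ :=
  fun _ _ h => h

theorem IsRenaming.liftR {Γ Δ : Ctx} {ρ : ℕ → ℕ} (hρ : IsRenaming Γ Δ ρ) (e : Frag × Ty) :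
    IsRenaming (e :: Γ) (e :: Δ) (Tm.liftR ρ)
  | 0, _, h => h
  | n + 1, p, h => hρ n p h

theorem Typing.rename {Γ Δ : Ctx} {θ : Frag} {a : Tm} {A : Ty} {ρ : ℕ → ℕ}
    (h : Typing Γ θ a A) (hρ : IsRenaming Γ Δ ρ) : Typing Δ θ (a.rename ρ) A := by
  induction h generalizing Δ ρ with
  | tvar h => exact .tvar (hρ _ _ h)
  | tlam _ ih => exact .tlam (ih (hρ.liftR _))
  | trec _ ih => exact .trec (ih ((hρ.liftR _).liftR _))
  | tboxP _ ih => exact .tboxP (ih hρ)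
  | tboxL _ ih => exact .tboxL (ih hρ)
  | tboxLV hv _ ih => exact .tboxLV (hv.rename ρ) (ih hρ)
  | tunbox _ _ ih₁ ih₂ => exact .tunbox (ih₁ hρ) (ih₂ (hρ.liftR _))
  | tapp _ _ ih₁ ih₂ => exact .tapp (ih₁ hρ) (ih₂ hρ)
  | tunit => exact .tunit
  | tsub _ ih => exact .tsub (ih hρ)
  | tfoval hv hA _ ih => exact .tfoval (hv.rename ρ) hA (ih hρ)
  | tinl _ ih => exact .tinl (ih hρ)
  | tinr _ ih => exact .tinr (ih hρ)
  | tcase _ _ _ ih ih₁ ih₂ => exact .tcase (ih hρ) (ih₁ (hρ.liftR _)) (ih₂ (hρ.liftR _))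
  | troll _ ih => exact .troll (ih hρ)
  | tunroll _ ih => exact .tunroll (ih hρ)

theorem IsTypedSubst.liftS {Γ Δ : Ctx} {σ : ℕ → Tm} (hσ : IsTypedSubst Γ Δ σ)
    (e : Frag × Ty) : IsTypedSubst (e :: Γ) (e :: Δ) (Tm.liftS σ)
  | 0, _, h => by
    obtain rfl := Option.some_injective _ h
    exact .tvar rfl
  | n + 1, p, h => (hσ n p h).rename (isRenaming_succ Δ e)

theorem Typing.subst {Γ Δ : Ctx} {θ : Frag} {a : Tm} {A : Ty} {σ : ℕ → Tm}
    (h : Typing Γ θ a A) (hval : ∀ n, IsValue (σ n)) (hσ : IsTypedSubst Γ Δ σ) :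
    Typing Δ θ (a.subst σ) A := by
  induction h generalizing Δ σ with
  | tvar h => exact hσ _ _ h
  | tlam _ ih => exact .tlam (ih (isValue_liftS hval) (hσ.liftS _))
  | trec _ ih =>
    exact .trec (ih (isValue_liftS (isValue_liftS hval)) ((hσ.liftS _).liftS _))
  | tboxP _ ih => exact .tboxP (ih hval hσ)
  | tboxL _ ih => exact .tboxL (ih hval hσ)
  | tboxLV hv _ ih => exact .tboxLV (hv.subst hval) (ih hval hσ)
  | tunbox _ _ ih₁ ih₂ => exact .tunbox (ih₁ hval hσ) (ih₂ (isValue_liftS hval) (hσ.liftS _))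
  | tapp _ _ ih₁ ih₂ => exact .tapp (ih₁ hval hσ) (ih₂ hval hσ)
  | tunit => exact .tunit
  | tsub _ ih => exact .tsub (ih hval hσ)
  | tfoval hv hA _ ih => exact .tfoval (hv.subst hval) hA (ih hval hσ)
  | tinl _ ih => exact .tinl (ih hval hσ)
  | tinr _ ih => exact .tinr (ih hval hσ)
  | tcase _ _ _ ih ih₁ ih₂ =>
    exact .tcase (ih hval hσ) (ih₁ (isValue_liftS hval) (hσ.liftS _))
      (ih₂ (isValue_liftS hval) (hσ.liftS _))
  | troll _ ih => exact .troll (ih hval hσ)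
  | tunroll _ ih => exact .tunroll (ih hval hσ)

/-- Value substitution: if Γ, x :^θ' B ⊢^θ a : A and Γ ⊢^θ' v : B with v a value,
    then Γ ⊢^θ [v/x]a : A. -/
theorem value_substitution {Γ : Ctx} {θ θ' : Frag} {a v : Tm} {A B : Ty}
    (ha : Typing ((θ', B) :: Γ) θ a A) (hv : IsValue v) (hB : Typing Γ θ' v B) :
    Typing Γ θ (subst1 a v) A := by
  refine ha.subst ?values ?typed
  case values => rintro (_ | n) <;> [exact hv; exact .var n]
  case typed =>
    rintro (_ | n) p hp
    · obtain rfl := Option.some_injective _ hp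
      exact hB
    · exact .tvar hp
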